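/- arXiv:1707.01297 — 2 statements merged into one kernel-verified Lean document; each statement's English description precedes it below -/
import Mathlib

section
/- Let M>1 and let φ be twice continuously differentiable on (0,∞); denote by |φ''|_∞ the maximum of |φ''| on [1/M, M]. Consider a finite set C of cells, each K∈C with measure |K|>0 and a finite face set E(K) with areas |σ|>0, and time levels n=0,…,N with constant time step δt>0. Suppose for all K, σ∈E(K) and n: e_K^{n} ∈ [1/M, M], e_σ^{n} ∈ (0, M], ρ_σ^{n} ∈ (0, M], and |u_{K,σ}^{n}| ≤ M; set F_{K,σ}^{n} = |σ|·ρ_σ^{n}·u_{K,σ}^{n}. Define, for each K and 0≤n≤N−1, |K|·R_K^{n+1} = (φ'(e_K^{n+1}) − φ'(e_K^{n}))·Σ_{σ∈E(K)} F_{K,σ}^{n}·(e_σ^{n} − e_K^{n}). Then Σ_{n=0}^{N−1} δt Σ_{K∈C} |K|·|R_K^{n+1}| ≤ 2·M³·|φ''|_∞·(Σ_{n=0}^{N−1} Σ_{K∈C} |K|·|e_K^{n+1}−e_K^{n}|)·(δt / h̲), where h̲ = min_{K∈C} |K| / (Σ_{σ∈E(K)} |σ|). -/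
/-!
Each remainder term factors as `(φ'(e_K^{n+1}) - φ'(e_K^n)) · Σ_σ F_{K,σ}(e_σ - e_K)`. The first
factor is at most `|φ''|_∞ |e_K^{n+1} - e_K^n|` by the mean value inequality, and the flux sum is
at most `2 M³ Σ_σ |σ| ≤ 2 M³ |K| / h̲`; summing over cells and time steps gives the bound.
-/

open Finset

theorem abs_deriv_sub_le_of_contDiffOn_two {φ : ℝ → ℝ} {U s : Set ℝ} (hU : IsOpen U)
    (hφ : ContDiffOn ℝ 2 φ U) (hs : Convex ℝ s) (hsU : s ⊆ U) {C : ℝ}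
    (hC : ∀ x ∈ s, |deriv (deriv φ) x| ≤ C) {x y : ℝ} (hx : x ∈ s) (hy : y ∈ s) :
    |deriv φ y - deriv φ x| ≤ C * |y - x| := by
  have hφ' : ContDiffOn ℝ 1 (deriv φ) U := hφ.deriv_of_isOpen hU (by norm_num)
  have hderiv : ∀ z ∈ s, HasDerivWithinAt (deriv φ) (deriv (deriv φ) z) s z := fun z hz =>
    ((hφ'.differentiableOn one_ne_zero).differentiableAt
      (hU.mem_nhds (hsU hz))).hasDerivAt.hasDerivWithinAt
  simpa only [Real.norm_eq_abs] using hs.norm_image_sub_le_of_norm_hasDerivWithin_le hderiv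
    (by simpa only [Real.norm_eq_abs] using hC) hx hy

theorem abs_sum_mul_le_mul_sum {ι : Type*} (s : Finset ι) {a b : ι → ℝ} {B : ℝ}
    (ha : ∀ i ∈ s, 0 ≤ a i) (hb : ∀ i ∈ s, |b i| ≤ B) :
    |∑ i ∈ s, a i * b i| ≤ B * ∑ i ∈ s, a i := by
  calc |∑ i ∈ s, a i * b i| ≤ ∑ i ∈ s, |a i * b i| := abs_sum_le_sum_abs _ _
    _ ≤ ∑ i ∈ s, B * a i := sum_le_sum fun i hi => by
        rw [abs_mul, abs_of_nonneg (ha i hi), mul_comm]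
        exact mul_le_mul_of_nonneg_right (hb i hi) (ha i hi)
    _ = B * ∑ i ∈ s, a i := (mul_sum _ _ _).symm

theorem le_div_inf'_div {ι : Type*} {s : Finset ι} (hs : s.Nonempty) {p q : ι → ℝ}
    (hp : ∀ i ∈ s, 0 < p i) (hq : ∀ i ∈ s, 0 < q i) {i : ι} (hi : i ∈ s) :
    q i ≤ p i / s.inf' hs (fun j => p j / q j) := by
  have hpos : 0 < s.inf' hs (fun j => p j / q j) :=
    (lt_inf'_iff hs).2 fun j hj => div_pos (hp j hj) (hq j hj)
  rw [le_div_iff₀ hpos, ← le_div_iff₀' (hq i hi)]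
  exact inf'_le _ hi

theorem abs_mul_sub_le_two_mul_pow_three {M ρ u a b : ℝ} (hρ : |ρ| ≤ M) (hu : |u| ≤ M)
    (ha : |a| ≤ M) (hb : |b| ≤ M) : |ρ * u * (a - b)| ≤ 2 * M ^ 3 := by
  have hM : 0 ≤ M := (abs_nonneg ρ).trans hρ
  have hab : |a - b| ≤ 2 * M := (abs_sub a b).trans (by linarith)
  rw [abs_mul, abs_mul]
  calc |ρ| * |u| * |a - b| ≤ M * M * (2 * M) := by gcongr
    _ = 2 * M ^ 3 := by ring

theorem abs_le_of_mem_Ioc_zero {b x : ℝ} (hx : x ∈ Set.Ioc 0 b) : |x| ≤ b :=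
  (abs_of_pos hx.1).trans_le hx.2

theorem explicit_energy_time_remainder_bound_general
    (M : ℝ) (hM : 1 < M)
    (φ : ℝ → ℝ) (hφ : ContDiffOn ℝ 2 φ (Set.Ioi 0))
    (C2 : ℝ) (hC2 : ∀ x ∈ Set.Icc (1 / M) M, |deriv (deriv φ) x| ≤ C2)
    (Cell Face : Type*) [Fintype Cell] [Nonempty Cell]
    (measK : Cell → ℝ) (hmeas : ∀ Kc, 0 < measK Kc)
    (E : Cell → Finset Face) (hE : ∀ Kc, (E Kc).Nonempty)
    (area : Face → ℝ) (harea : ∀ f, 0 < area f)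
    (N : ℕ) (δt : ℝ) (hδt : 0 < δt)
    (e : Cell → ℕ → ℝ) (he : ∀ Kc n, n ≤ N → e Kc n ∈ Set.Icc (1 / M) M)
    (eface : Face → ℕ → ℝ) (heface : ∀ f n, n ≤ N → eface f n ∈ Set.Ioc 0 M)
    (ρface : Face → ℕ → ℝ) (hρface : ∀ f n, n ≤ N → ρface f n ∈ Set.Ioc 0 M)
    (uK : Cell → Face → ℕ → ℝ) (hu : ∀ Kc f n, n ≤ N → |uK Kc f n| ≤ M) :
    ∑ n ∈ Finset.range N, δt * ∑ Kc : Cell,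
        |(deriv φ (e Kc (n + 1)) - deriv φ (e Kc n)) *
          ∑ f ∈ E Kc, (area f * ρface f n * uK Kc f n) * (eface f n - e Kc n)|
      ≤ 2 * M ^ 3 * C2 * (∑ n ∈ Finset.range N, ∑ Kc : Cell, measK Kc * |e Kc (n + 1) - e Kc n|)
          * (δt / Finset.univ.inf' Finset.univ_nonempty
              (fun Kc => measK Kc / ∑ f ∈ E Kc, area f)) := by
  set h := univ.inf' univ_nonempty (fun Kc => measK Kc / ∑ f ∈ E Kc, area f)
  have hM0 : 0 < M := one_pos.trans hM
  have hIcc : Set.Icc (1 / M) M ⊆ Set.Ioi 0 := fun x hx => (one_div_pos.2 hM0).trans_le hx.1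
  have hlip : ∀ Kc, ∀ n < N,
      |deriv φ (e Kc (n + 1)) - deriv φ (e Kc n)| ≤ C2 * |e Kc (n + 1) - e Kc n| :=
    fun Kc n hn => abs_deriv_sub_le_of_contDiffOn_two isOpen_Ioi hφ (convex_Icc _ _) hIcc hC2
      (he Kc n hn.le) (he Kc (n + 1) hn)
  have hflux : ∀ Kc, ∀ n < N,
      |∑ f ∈ E Kc, (area f * ρface f n * uK Kc f n) * (eface f n - e Kc n)|
        ≤ 2 * M ^ 3 * ∑ f ∈ E Kc, area f := fun Kc n hn => by
    rw [sum_congr rfl fun f _ => by rw [mul_assoc (area f), mul_assoc (area f)]]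
    exact abs_sum_mul_le_mul_sum _ (fun f _ => (harea f).le) fun f _ =>
      have heK := he Kc n hn.le
      abs_mul_sub_le_two_mul_pow_three (abs_le_of_mem_Ioc_zero (hρface f n hn.le))
        (hu Kc f n hn.le)
        (abs_le_of_mem_Ioc_zero (heface f n hn.le)) ((abs_of_pos (hIcc heK)).trans_le heK.2)
  have hmesh : ∀ Kc, ∑ f ∈ E Kc, area f ≤ measK Kc / h := fun Kc =>
    le_div_inf'_div univ_nonempty (fun Kc _ => hmeas Kc)
      (fun Kc _ => sum_pos (fun f _ => harea f) (hE Kc)) (mem_univ Kc)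
  calc _ = ∑ n ∈ range N, ∑ Kc, δt * (|deriv φ (e Kc (n + 1)) - deriv φ (e Kc n)| *
          |∑ f ∈ E Kc, (area f * ρface f n * uK Kc f n) * (eface f n - e Kc n)|) := by
        simp only [abs_mul, mul_sum (s := univ)]
    _ ≤ ∑ n ∈ range N, ∑ Kc, δt * (C2 * |e Kc (n + 1) - e Kc n| *
          (2 * M ^ 3 * (measK Kc / h))) := by
        gcongr ∑ n ∈ range N, ∑ Kc, δt * ?_ with n hn Kc
        have hn := mem_range.1 hn
        exact mul_le_mul (hlip Kc n hn) ((hflux Kc n hn).trans (by gcongr; exact hmesh Kc))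
          (abs_nonneg _) ((abs_nonneg _).trans (hlip Kc n hn))
    _ = _ := by
        simp only [mul_sum, sum_mul]
        refine sum_congr rfl fun n _ => sum_congr rfl fun Kc _ => ?_
        ring

/-- L¹ bound (Lemma 3.8) on the remainder of the explicit time discretization of the
renormalized internal energy balance:
`‖R‖_{L¹} ≤ 2 M³ |φ''|_∞ |e|_{T,BV} (δt / h̲)`, where
`h̲ = min_K |K| / Σ_{σ∈E(K)} |σ|` and `F_{K,σ} = |σ| ρ_σ u_{K,σ}`. -/
theorem explicit_energy_time_remainder_bound
    (M : ℝ) (hM : 1 < M)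
    (φ : ℝ → ℝ) (hφ : ContDiffOn ℝ 2 φ (Set.Ioi 0))
    (C2 : ℝ) (hC2 : ∀ x ∈ Set.Icc (1 / M) M, |deriv (deriv φ) x| ≤ C2)
    (Cell Face : Type*) [Fintype Cell] [Fintype Face] [Nonempty Cell]
    (measK : Cell → ℝ) (hmeas : ∀ Kc, 0 < measK Kc)
    (E : Cell → Finset Face) (hE : ∀ Kc, (E Kc).Nonempty)
    (area : Face → ℝ) (harea : ∀ f, 0 < area f)
    (N : ℕ) (δt : ℝ) (hδt : 0 < δt)
    (e : Cell → ℕ → ℝ) (he : ∀ Kc n, n ≤ N → e Kc n ∈ Set.Icc (1 / M) M)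
    (eface : Face → ℕ → ℝ) (heface : ∀ f n, n ≤ N → eface f n ∈ Set.Ioc 0 M)
    (ρface : Face → ℕ → ℝ) (hρface : ∀ f n, n ≤ N → ρface f n ∈ Set.Ioc 0 M)
    (uK : Cell → Face → ℕ → ℝ) (hu : ∀ Kc f n, n ≤ N → |uK Kc f n| ≤ M) :
    ∑ n ∈ Finset.range N, δt * ∑ Kc : Cell,
        |(deriv φ (e Kc (n + 1)) - deriv φ (e Kc n)) *
          ∑ f ∈ E Kc, (area f * ρface f n * uK Kc f n) * (eface f n - e Kc n)|
      ≤ 2 * M ^ 3 * C2 * (∑ n ∈ Finset.range N, ∑ Kc : Cell, measK Kc * |e Kc (n + 1) - e Kc n|)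
          * (δt / Finset.univ.inf' Finset.univ_nonempty
              (fun Kc => measK Kc / ∑ f ∈ E Kc, area f)) :=
  explicit_energy_time_remainder_bound_general M hM φ hφ C2 hC2 Cell Face measK hmeas E hE area
    harea N δt hδt e he eface heface ρface hρface uK hu
end

section
/- Let γ>1 and M>1. Consider discrete mesh data with a single time level n, oriented face velocities u_f with |u_f| ≤ M, face densities ρ_f ∈ (0,M], cell energies e_K ∈ [1/M,M], and mass fluxes F_{K,f} = |σ_f|·ρ_f·u_{K,f}. For each internal face f let e_{KL,f} ∈ [[e_{K_f}, e_{L_f}]] be the tangent-intersection point of φ_e at e_{K_f} and e_{L_f} (equal to the common value when they coincide), and let the face energy e_f satisfy e_f ∈ [[e_{K_f}, e_{KL,f}]] if u_f ≥ 0 and e_f ∈ [[e_{L_f}, e_{KL,f}]] otherwise. Define (δφ_e)_f = φ_e(e_{K_f}) − φ_e(e_f) + φ_e'(e_{K_f})(e_{KL,f}−e_{K_f}) + (1/2)(φ_e'(e_{K_f})+φ_e'(e_{L_f}))·(e_f−e_{KL,f}), and for each cell K set |K|·(δR₂)_K = Σ_{f∈E(K)} (δφ_e)_f·F_{K,f}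 and |K|·(R₂)_K = Σ_{f∈E(K)} F_{K,f}·(φ_e(e_K) + φ_e'(e_K)(e_f − e_K) − φ_e(e_f)). Then: (a) (R₂)_K ≥ (δR₂)_K for every cell K; (b) for every h>0, G≥0 and every family of reals (ψ_K) with |ψ_{K_f} − ψ_{L_f}| ≤ G·h for every internal face f, |Σ_{K∈C} |K|·(δR₂)_K·ψ_K| ≤ 3·M²·|φ_e'|_∞·G·h·Σ_{f∈F} |σ_f|·|e_{K_f}−e_{L_f}|, where |φ_e'|_∞ = max(|φ_e'(1/M)|, |φ_e'(M)|). -/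
/-- `φ_e(z) = -log z / (γ-1)`. -/
noncomputable def phiE (γ z : ℝ) : ℝ := -Real.log z / (γ - 1)

/-- `φ_e'(z) = -1/((γ-1) z)`. -/
noncomputable def phiE' (γ z : ℝ) : ℝ := -1 / ((γ - 1) * z)

/-- The set `E(K)` of faces incident to the cell `K`. -/
def cellFaces {Cell Face : Type*} [Fintype Face] [DecidableEq Cell]
    (Kf Lf : Face → Cell) (Kc : Cell) : Finset Face :=
  Finset.univ.filter (fun f => Kf f = Kc ∨ Lf f = Kc)

/-- Oriented normal velocity `u_{K,f}`. -/
def orientedVel {Cell Face : Type*} [DecidableEq Cell]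
    (Kf : Face → Cell) (uf : Face → ℝ) (Kc : Cell) (f : Face) : ℝ :=
  if Kf f = Kc then uf f else -uf f

/-- The per-face quantity `(δφ)_σ` of the reduced-diffusion remainder. -/
noncomputable def dphi (φ φ' : ℝ → ℝ) (xK xL xKL xσ : ℝ) : ℝ :=
  φ xK - φ xσ + φ' xK * (xKL - xK) + 1 / 2 * (φ' xK + φ' xL) * (xσ - xKL)

/-! The tangent lines of `φ_e` lie below its graph. Writing
`B_K(x) = φ(x_K) + φ'(x_K)(x - x_K) - φ(x)` for the Bregman-type remainder of cell `K`, one has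
`B_K(x_σ) - (δφ)_σ = (φ'(x_K) - φ'(x_L))(x_σ - x_KL) / 2`, and, because the tangents at `x_K` and
`x_L` meet at `x_KL`, `B_L(x_σ) - (δφ)_σ` is the opposite quantity. The upwind choice of `x_σ`
gives this quantity the sign of `u_σ`, which is (a). For (b), the flux is conservative, so the
sum over cells telescopes into a sum over faces of `(δφ)_σ u_σ (ψ_K - ψ_L)`, and each
`(δφ)_σ` is `O(|x_K - x_L|)` because all the points involved lie between `x_K` and `x_L`. -/

def HasSupportingLinesOn (φ φ' : ℝ → ℝ) (s : Set ℝ) : Prop :=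
  ∀ x ∈ s, ∀ y ∈ s, φ x + φ' x * (y - x) ≤ φ y

namespace HasSupportingLinesOn

variable {φ φ' : ℝ → ℝ} {s : Set ℝ}

theorem mono {t : Set ℝ} (h : HasSupportingLinesOn φ φ' s) (hts : t ⊆ s) :
    HasSupportingLinesOn φ φ' t :=
  fun x hx y hy => h x (hts hx) y (hts hy)

theorem monotoneOn (h : HasSupportingLinesOn φ φ' s) : MonotoneOn φ' s := by
  intro x hx y hy hxy
  rcases hxy.eq_or_lt with rfl | hlt
  · exact le_rfl
  have hxy' := h x hx y hy
  have hyx := h y hy x hx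
  nlinarith

theorem abs_sub_le {B x y : ℝ} (h : HasSupportingLinesOn φ φ' s) (hx : x ∈ s) (hy : y ∈ s)
    (hBx : |φ' x| ≤ B) (hBy : |φ' y| ≤ B) : |φ x - φ y| ≤ B * |x - y| := by
  have hxy := h x hx y hy
  have hyx := h y hy x hx
  have hx' : |φ' x * (x - y)| ≤ B * |x - y| := by
    rw [abs_mul]; exact mul_le_mul_of_nonneg_right hBx (abs_nonneg _)
  have hy' : |φ' y * (x - y)| ≤ B * |x - y| := by
    rw [abs_mul]; exact mul_le_mul_of_nonneg_right hBy (abs_nonneg _)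
  rw [abs_le] at hx' hy' ⊢
  constructor <;> nlinarith

end HasSupportingLinesOn

theorem MonotoneOn.abs_le_max_abs {f : ℝ → ℝ} {a b x : ℝ} (hf : MonotoneOn f (Set.Icc a b))
    (hx : x ∈ Set.Icc a b) : |f x| ≤ max |f a| |f b| :=
  abs_le_max_abs_abs (hf ⟨le_rfl, hx.1.trans hx.2⟩ hx hx.1)
    (hf hx ⟨hx.1.trans hx.2, le_rfl⟩ hx.2)

theorem abs_sub_le_of_mem_uIcc {a b p q : ℝ} (hp : p ∈ Set.uIcc a b) (hq : q ∈ Set.uIcc a b) :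
    |p - q| ≤ |a - b| := by
  rw [abs_sub_comm a b]
  exact Set.abs_sub_le_of_uIcc_subset_uIcc (Set.uIcc_subset_uIcc hq hp)

theorem mem_uIcc_of_upwind {xK xL xKL xσ u : ℝ} (hKL : xKL ∈ Set.uIcc xK xL)
    (hσ₁ : 0 ≤ u → xσ ∈ Set.uIcc xK xKL) (hσ₂ : u < 0 → xσ ∈ Set.uIcc xL xKL) :
    xσ ∈ Set.uIcc xK xL := by
  rcases le_or_gt 0 u with hu | hu
  · exact Set.uIcc_subset_uIcc Set.left_mem_uIcc hKL (hσ₁ hu)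
  · exact Set.uIcc_subset_uIcc Set.right_mem_uIcc hKL (hσ₂ hu)

theorem phiE_hasSupportingLinesOn {γ : ℝ} (hγ : 1 < γ) :
    HasSupportingLinesOn (phiE γ) (phiE' γ) (Set.Ioi 0) := by
  intro x (hx : 0 < x) y (hy : 0 < y)
  have hlog : Real.log y - Real.log x ≤ (y - x) / x := by
    rw [← Real.log_div hy.ne' hx.ne', sub_div, div_self hx.ne']
    exact Real.log_le_sub_one_of_pos (div_pos hy hx)
  have hgap : phiE γ y - (phiE γ x + phiE' γ x * (y - x))
      = ((y - x) / x - (Real.log y - Real.log x)) / (γ - 1) := by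
    unfold phiE phiE'
    field_simp
    ring
  have := div_nonneg (sub_nonneg.mpr hlog) (sub_pos.mpr hγ).le
  linarith

section dphi

variable (φ φ' : ℝ → ℝ) {xK xL xKL xσ : ℝ}

theorem bregman_left_sub_dphi :
    φ xK + φ' xK * (xσ - xK) - φ xσ - dphi φ φ' xK xL xKL xσ
      = (φ' xK - φ' xL) * (xσ - xKL) / 2 := by
  unfold dphi; ring

theorem bregman_right_sub_dphi
    (htan : φ xK + φ' xK * (xKL - xK) = φ xL + φ' xL * (xKL - xL)) :
    φ xL + φ' xL * (xσ - xL) - φ xσ - dphi φ φ' xK xL xKL xσ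
      = -((φ' xK - φ' xL) * (xσ - xKL) / 2) := by
  unfold dphi; linear_combination -htan

variable {φ φ'} {s : Set ℝ}

theorem MonotoneOn.mul_sub_nonneg_of_upwind (hφ' : MonotoneOn φ' s) (hK : xK ∈ s) (hL : xL ∈ s)
    (hKL : xKL ∈ Set.uIcc xK xL) {u : ℝ} (hσ₁ : 0 ≤ u → xσ ∈ Set.uIcc xK xKL)
    (hσ₂ : u < 0 → xσ ∈ Set.uIcc xL xKL) :
    0 ≤ u * ((φ' xK - φ' xL) * (xσ - xKL)) := by
  rcases le_total xK xL with hKL' | hLK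
  · have hφ : φ' xK - φ' xL ≤ 0 := sub_nonpos.mpr (hφ' hK hL hKL')
    rw [Set.uIcc_of_le hKL'] at hKL
    rcases le_or_gt 0 u with hu | hu
    · rw [Set.uIcc_of_le hKL.1] at hσ₁
      exact mul_nonneg hu (mul_nonneg_of_nonpos_of_nonpos hφ (by linarith [(hσ₁ hu).2]))
    · rw [Set.uIcc_of_ge hKL.2] at hσ₂
      exact mul_nonneg_of_nonpos_of_nonpos hu.le
        (mul_nonpos_of_nonpos_of_nonneg hφ (by linarith [(hσ₂ hu).1]))
  · have hφ : 0 ≤ φ' xK - φ' xL := sub_nonneg.mpr (hφ' hL hK hLK)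
    rw [Set.uIcc_of_ge hLK] at hKL
    rcases le_or_gt 0 u with hu | hu
    · rw [Set.uIcc_of_ge hKL.2] at hσ₁
      exact mul_nonneg hu (mul_nonneg hφ (by linarith [(hσ₁ hu).1]))
    · rw [Set.uIcc_of_le hKL.1] at hσ₂
      exact mul_nonneg_of_nonpos_of_nonpos hu.le
        (mul_nonpos_of_nonneg_of_nonpos hφ (by linarith [(hσ₂ hu).2]))

theorem dphi_mul_flux_le_left (hφ' : MonotoneOn φ' s) (hK : xK ∈ s) (hL : xL ∈ s)
    (hKL : xKL ∈ Set.uIcc xK xL) {u c : ℝ} (hσ₁ : 0 ≤ u → xσ ∈ Set.uIcc xK xKL)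
    (hσ₂ : u < 0 → xσ ∈ Set.uIcc xL xKL) (hc : 0 ≤ c) :
    dphi φ φ' xK xL xKL xσ * (c * u) ≤ c * u * (φ xK + φ' xK * (xσ - xK) - φ xσ) := by
  have hup := mul_nonneg hc (hφ'.mul_sub_nonneg_of_upwind hK hL hKL hσ₁ hσ₂)
  have hsplit := bregman_left_sub_dphi φ φ' (xK := xK) (xL := xL) (xKL := xKL) (xσ := xσ)
  linear_combination hup / 2 - c * u * hsplit

theorem dphi_mul_flux_le_right (hφ' : MonotoneOn φ' s) (hK : xK ∈ s) (hL : xL ∈ s)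
    (hKL : xKL ∈ Set.uIcc xK xL)
    (htan : φ xK + φ' xK * (xKL - xK) = φ xL + φ' xL * (xKL - xL)) {u c : ℝ}
    (hσ₁ : 0 ≤ u → xσ ∈ Set.uIcc xK xKL) (hσ₂ : u < 0 → xσ ∈ Set.uIcc xL xKL) (hc : 0 ≤ c) :
    dphi φ φ' xK xL xKL xσ * (c * -u) ≤ c * -u * (φ xL + φ' xL * (xσ - xL) - φ xσ) := by
  have hup := mul_nonneg hc (hφ'.mul_sub_nonneg_of_upwind hK hL hKL hσ₁ hσ₂)
  have hsplit := bregman_right_sub_dphi φ φ' (xσ := xσ) htan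
  linear_combination hup / 2 + c * u * hsplit

theorem abs_dphi_le {B : ℝ} (hφ : HasSupportingLinesOn φ φ' (Set.uIcc xK xL))
    (hB : ∀ x ∈ Set.uIcc xK xL, |φ' x| ≤ B)
    (hKL : xKL ∈ Set.uIcc xK xL) (hσ : xσ ∈ Set.uIcc xK xL) :
    |dphi φ φ' xK xL xKL xσ| ≤ 3 * B * |xK - xL| := by
  have hK := hB xK Set.left_mem_uIcc
  have hL := hB xL Set.right_mem_uIcc
  have hB0 : 0 ≤ B := (abs_nonneg _).trans hK
  have h₁ : |φ xK - φ xσ| ≤ B * |xK - xL| :=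
    (hφ.abs_sub_le Set.left_mem_uIcc hσ hK (hB xσ hσ)).trans
      (mul_le_mul_of_nonneg_left (abs_sub_le_of_mem_uIcc Set.left_mem_uIcc hσ) hB0)
  have h₂ : |φ' xK * (xKL - xK)| ≤ B * |xK - xL| := by
    rw [abs_mul]
    exact mul_le_mul hK (abs_sub_le_of_mem_uIcc hKL Set.left_mem_uIcc) (abs_nonneg _) hB0
  have h₃ : |1 / 2 * (φ' xK + φ' xL) * (xσ - xKL)| ≤ B * |xK - xL| := by
    have hsum : |1 / 2 * (φ' xK + φ' xL)| ≤ B := by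
      rw [abs_mul, abs_of_pos one_half_pos]
      linarith [abs_add_le (φ' xK) (φ' xL)]
    rw [abs_mul]
    exact mul_le_mul hsum (abs_sub_le_of_mem_uIcc hσ hKL) (abs_nonneg _) hB0
  calc |dphi φ φ' xK xL xKL xσ|
      ≤ |φ xK - φ xσ| + |φ' xK * (xKL - xK)| + |1 / 2 * (φ' xK + φ' xL) * (xσ - xKL)| :=
        (abs_add_le _ _).trans (add_le_add_left (abs_add_le _ _) _)
    _ ≤ 3 * B * |xK - xL| := by linarith

theorem abs_dphi_le_of_mem_Icc {a b : ℝ} (hφ : HasSupportingLinesOn φ φ' (Set.Icc a b))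
    (hK : xK ∈ Set.Icc a b) (hL : xL ∈ Set.Icc a b)
    (hKL : xKL ∈ Set.uIcc xK xL) (hσ : xσ ∈ Set.uIcc xK xL) :
    |dphi φ φ' xK xL xKL xσ| ≤ 3 * max |φ' a| |φ' b| * |xK - xL| :=
  have hsub := Set.uIcc_subset_Icc hK hL
  abs_dphi_le (hφ.mono hsub) (fun _ hx => hφ.monotoneOn.abs_le_max_abs (hsub hx)) hKL hσ

end dphi

theorem abs_mul_flux_mul_le {d D a ρ u p P M : ℝ} (hd : |d| ≤ D) (ha : 0 ≤ a)
    (hρ : ρ ∈ Set.Ioc 0 M) (hu : |u| ≤ M) (hp : |p| ≤ P) :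
    |d * (a * ρ * u) * p| ≤ D * (a * M * M) * P := by
  have hflux : |a * ρ * u| ≤ a * M * M := by
    rw [abs_mul, abs_mul, abs_of_nonneg ha, abs_of_pos hρ.1]
    exact mul_le_mul (mul_le_mul_of_nonneg_left hρ.2 ha) hu (abs_nonneg _)
      (mul_nonneg ha (hρ.1.le.trans hρ.2))
  have hD := (abs_nonneg _).trans hd
  rw [abs_mul, abs_mul]
  exact mul_le_mul (mul_le_mul hd hflux (abs_nonneg _) hD) hp (abs_nonneg _)
    (mul_nonneg hD ((abs_nonneg _).trans hflux))

section mesh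

variable {Cell Face : Type*} [DecidableEq Cell] {Kf Lf : Face → Cell} {uf : Face → ℝ}

theorem dphi_mul_orientedVel_le {φ φ' : ℝ → ℝ} {s : Set ℝ} {x : Cell → ℝ} {f : Face}
    {Kc : Cell} {xKL xσ c : ℝ} (hφ' : MonotoneOn φ' s) (hK : x (Kf f) ∈ s) (hL : x (Lf f) ∈ s)
    (hKL : xKL ∈ Set.uIcc (x (Kf f)) (x (Lf f)))
    (htan : φ (x (Kf f)) + φ' (x (Kf f)) * (xKL - x (Kf f))
      = φ (x (Lf f)) + φ' (x (Lf f)) * (xKL - x (Lf f)))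
    (hσ₁ : 0 ≤ uf f → xσ ∈ Set.uIcc (x (Kf f)) xKL)
    (hσ₂ : uf f < 0 → xσ ∈ Set.uIcc (x (Lf f)) xKL) (hc : 0 ≤ c)
    (hne : Kf f ≠ Lf f) (hKc : Kf f = Kc ∨ Lf f = Kc) :
    dphi φ φ' (x (Kf f)) (x (Lf f)) xKL xσ * (c * orientedVel Kf uf Kc f)
      ≤ c * orientedVel Kf uf Kc f * (φ (x Kc) + φ' (x Kc) * (xσ - x Kc) - φ xσ) := by
  rcases hKc with rfl | rfl
  · rw [orientedVel, if_pos rfl]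
    exact dphi_mul_flux_le_left hφ' hK hL hKL hσ₁ hσ₂ hc
  · rw [orientedVel, if_neg hne]
    exact dphi_mul_flux_le_right hφ' hK hL hKL htan hσ₁ hσ₂ hc

theorem sum_cellFaces_orientedVel_mul [Fintype Cell] [Fintype Face] (hKL : ∀ f, Kf f ≠ Lf f)
    (w c : Face → ℝ) (ψ : Cell → ℝ) :
    ∑ Kc, (∑ f ∈ cellFaces Kf Lf Kc, w f * (c f * orientedVel Kf uf Kc f)) * ψ Kc
      = ∑ f, w f * (c f * uf f) * (ψ (Kf f) - ψ (Lf f)) := by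
  simp_rw [Finset.sum_mul, cellFaces, Finset.sum_filter]
  rw [Finset.sum_comm]
  refine Finset.sum_congr rfl fun f _ => ?_
  have hfaces : Finset.univ.filter (fun Kc => Kf f = Kc ∨ Lf f = Kc) = {Kf f, Lf f} := by
    ext Kc; simp [eq_comm]
  rw [← Finset.sum_filter, hfaces, Finset.sum_pair (hKL f)]
  simp only [orientedVel, ↓reduceIte, hKL f, mul_neg, neg_mul]
  ring

end mesh

/-- Splitting of the explicit internal-energy convection remainder under the
limitation assumption `(H_e^exp)` (Lemma 3.9): (a) the remainder `(R₂)_K` dominates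
the conservative part `(δR₂)_K`, and (b) the conservative part satisfies a weak
(dual-norm) estimate. -/
theorem explicit_reduced_diffusion_energy_remainder
    (γ M : ℝ) (hγ : 1 < γ) (hM : 1 < M)
    (Cell Face : Type*) [Fintype Cell] [Fintype Face] [DecidableEq Cell]
    (Kf Lf : Face → Cell) (hKL : ∀ f, Kf f ≠ Lf f)
    (area : Face → ℝ) (harea : ∀ f, 0 < area f)
    (measK : Cell → ℝ) (hmeas : ∀ Kc, 0 < measK Kc)
    (uf : Face → ℝ) (hu : ∀ f, |uf f| ≤ M)
    (ρf : Face → ℝ) (hρf : ∀ f, ρf f ∈ Set.Ioc 0 M)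
    (e : Cell → ℝ) (he : ∀ Kc, e Kc ∈ Set.Icc (1 / M) M)
    (eKL ef : Face → ℝ)
    (hKLmem : ∀ f, eKL f ∈ Set.uIcc (e (Kf f)) (e (Lf f)))
    (hKLtan : ∀ f, e (Kf f) ≠ e (Lf f) →
      phiE γ (e (Kf f)) + phiE' γ (e (Kf f)) * (eKL f - e (Kf f))
        = phiE γ (e (Lf f)) + phiE' γ (e (Lf f)) * (eKL f - e (Lf f)))
    (hKLeq : ∀ f, e (Kf f) = e (Lf f) → eKL f = e (Kf f))
    (hface₁ : ∀ f, 0 ≤ uf f → ef f ∈ Set.uIcc (e (Kf f)) (eKL f))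
    (hface₂ : ∀ f, uf f < 0 → ef f ∈ Set.uIcc (e (Lf f)) (eKL f)) :
    (∀ Kc : Cell,
      (∑ f ∈ cellFaces Kf Lf Kc,
          dphi (phiE γ) (phiE' γ) (e (Kf f)) (e (Lf f)) (eKL f) (ef f) *
            (area f * ρf f * orientedVel Kf uf Kc f)) / measK Kc
        ≤ (∑ f ∈ cellFaces Kf Lf Kc,
            (area f * ρf f * orientedVel Kf uf Kc f) *
              (phiE γ (e Kc) + phiE' γ (e Kc) * (ef f - e Kc) - phiE γ (ef f))) / measK Kc)
    ∧ ∀ (h G : ℝ), 0 < h → 0 ≤ G → ∀ ψ : Cell → ℝ,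
        (∀ f, |ψ (Kf f) - ψ (Lf f)| ≤ G * h) →
        |∑ Kc : Cell,
            (∑ f ∈ cellFaces Kf Lf Kc,
              dphi (phiE γ) (phiE' γ) (e (Kf f)) (e (Lf f)) (eKL f) (ef f) *
                (area f * ρf f * orientedVel Kf uf Kc f)) * ψ Kc|
          ≤ 3 * M ^ 2 * max |phiE' γ (1 / M)| |phiE' γ M| * G * h *
              ∑ f : Face, area f * |e (Kf f) - e (Lf f)| := by
  have hφ := phiE_hasSupportingLinesOn hγ
  have hIcc : Set.Icc (1 / M) M ⊆ Set.Ioi 0 := fun _ hx =>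
    (one_div_pos.mpr (by linarith)).trans_le hx.1
  have htan : ∀ f, phiE γ (e (Kf f)) + phiE' γ (e (Kf f)) * (eKL f - e (Kf f))
      = phiE γ (e (Lf f)) + phiE' γ (e (Lf f)) * (eKL f - e (Lf f)) := fun f => by
    by_cases hc : e (Kf f) = e (Lf f)
    · rw [hKLeq f hc, hc]
    · exact hKLtan f hc
  refine ⟨fun Kc => div_le_div_of_nonneg_right (Finset.sum_le_sum fun f hf => ?_) (hmeas Kc).le,
    fun h G _ _ ψ hψ => ?_⟩
  · exact dphi_mul_orientedVel_le hφ.monotoneOn (hIcc (he _)) (hIcc (he _)) (hKLmem f) (htan f)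
      (hface₁ f) (hface₂ f) (mul_pos (harea f) (hρf f).1).le (hKL f) (Finset.mem_filter.mp hf).2
  rw [sum_cellFaces_orientedVel_mul hKL, Finset.mul_sum]
  refine (Finset.abs_sum_le_sum_abs _ _).trans (Finset.sum_le_sum fun f _ => ?_)
  have hdphi := abs_dphi_le_of_mem_Icc (hφ.mono hIcc) (he _) (he _) (hKLmem f)
    (mem_uIcc_of_upwind (hKLmem f) (hface₁ f) (hface₂ f))
  calc _ ≤ _ := abs_mul_flux_mul_le hdphi (harea f).le (hρf f) (hu f) (hψ f)
    _ = _ := by ring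
end
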